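/- arXiv:2111.02104 — 3 statements merged into one kernel-verified Lean document; each statement's English description precedes it below -/
import Mathlib

section
/- Let H, m, d be positive integers, let U : ℝ^H → ℝ^m, V : ℝ^d → ℝ^m and W : ℝ^m → ℝ^d be linear maps, let S be a nonempty finite set, and let z, z' : S → ℝ^d. For a trajectory representation τ ∈ ℝ^H define the trajectorial recall loss restricted to the common transitions S by L(τ) = Σ_{s ∈ S} ‖W(Uτ + V(z s)) − z' s‖². Then for any two trajectory representations τ₁, τ₂ ∈ ℝ^H one has L(τ₁) + L(τ₂) ≥ (|S|/2)·‖W(U(τ₁ − τ₂))‖². -/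
/-! On each common transition `s` the two residuals `W (U τᵢ + V (z s)) - z' s` differ by the
same vector `W (U (τ₁ - τ₂))`, because the input and the target are shared. Hence
`‖W (U (τ₁ - τ₂))‖² ≤ (‖r₁‖ + ‖r₂‖)² ≤ 2 (‖r₁‖² + ‖r₂‖²)` for each `s`; summing over `S`
gives the bound. -/

open Finset

lemma norm_sub_sq_le_two_mul {E : Type*} [SeminormedAddCommGroup E] (a b : E) :
    ‖a - b‖ ^ 2 ≤ 2 * (‖a‖ ^ 2 + ‖b‖ ^ 2) :=
  calc ‖a - b‖ ^ 2 ≤ (‖a‖ + ‖b‖) ^ 2 := by gcongr; exact norm_sub_le a b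
    _ ≤ 2 * (‖a‖ ^ 2 + ‖b‖ ^ 2) := add_sq_le

lemma card_div_two_mul_norm_sq_le_sum_add_sum {ι E : Type*} [Fintype ι]
    [SeminormedAddCommGroup E] (f g : ι → E) (c : E) (hfg : ∀ i, f i - g i = c) :
    (Fintype.card ι / 2 : ℝ) * ‖c‖ ^ 2 ≤ ∑ i, ‖f i‖ ^ 2 + ∑ i, ‖g i‖ ^ 2 := by
  rw [← sum_add_distrib]
  calc (Fintype.card ι / 2 : ℝ) * ‖c‖ ^ 2 = ∑ _i : ι, ‖c‖ ^ 2 / 2 := by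
        rw [sum_const, card_univ, nsmul_eq_mul]; ring
    _ ≤ ∑ i, (‖f i‖ ^ 2 + ‖g i‖ ^ 2) := by
        refine sum_le_sum fun i _ => ?_
        have := norm_sub_sq_le_two_mul (f i) (g i)
        rw [hfg i] at this
        linarith

theorem tr_loss_lower_bound_general
    (H m d : ℕ)
    (U : EuclideanSpace ℝ (Fin H) →ₗ[ℝ] EuclideanSpace ℝ (Fin m))
    (V : EuclideanSpace ℝ (Fin d) →ₗ[ℝ] EuclideanSpace ℝ (Fin m))
    (W : EuclideanSpace ℝ (Fin m) →ₗ[ℝ] EuclideanSpace ℝ (Fin d))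
    (S : Type) [Fintype S]
    (z z' : S → EuclideanSpace ℝ (Fin d))
    (L : EuclideanSpace ℝ (Fin H) → ℝ)
    (hL : ∀ τ, L τ = ∑ s : S, ‖W (U τ + V (z s)) - z' s‖ ^ 2)
    (τ₁ τ₂ : EuclideanSpace ℝ (Fin H)) :
    L τ₁ + L τ₂ ≥ ((Fintype.card S : ℝ) / 2) * ‖W (U (τ₁ - τ₂))‖ ^ 2 := by
  rw [hL, hL]
  refine card_div_two_mul_norm_sq_le_sum_add_sum _ _ _ fun s => ?_
  simp only [map_add, map_sub]
  abel

/-- Appendix A (TR loss for a linear trajectory model): if two trajectories share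
the common-transition set `S` (same input `z s` and same target `z' s`), then the
sum of their TR losses bounds `(|S|/2) · ‖W (U (τ₁ - τ₂))‖²` from above. -/
theorem tr_loss_lower_bound
    (H m d : ℕ) (hH : 0 < H) (hm : 0 < m) (hd : 0 < d)
    (U : EuclideanSpace ℝ (Fin H) →ₗ[ℝ] EuclideanSpace ℝ (Fin m))
    (V : EuclideanSpace ℝ (Fin d) →ₗ[ℝ] EuclideanSpace ℝ (Fin m))
    (W : EuclideanSpace ℝ (Fin m) →ₗ[ℝ] EuclideanSpace ℝ (Fin d))
    (S : Type) [Fintype S] [Nonempty S]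
    (z z' : S → EuclideanSpace ℝ (Fin d))
    (L : EuclideanSpace ℝ (Fin H) → ℝ)
    (hL : ∀ τ, L τ = ∑ s : S, ‖W (U τ + V (z s)) - z' s‖ ^ 2)
    (τ₁ τ₂ : EuclideanSpace ℝ (Fin H)) :
    L τ₁ + L τ₂ ≥ ((Fintype.card S : ℝ) / 2) * ‖W (U (τ₁ - τ₂))‖ ^ 2 :=
  tr_loss_lower_bound_general H m d U V W S z z' L hL τ₁ τ₂
end

section
/- Let H, m, d be positive integers, let U : ℝ^H → ℝ^m, V : ℝ^d → ℝ^m and W : ℝ^m → ℝ^d be linear maps, let S be a nonempty finite set, and let z, z' : S → ℝ^d. Define L(τ) = Σ_{s ∈ S} ‖W(Uτ + V(z s)) − z' s‖² for τ ∈ ℝ^H. Suppose σ > 0 satisfies ‖W(U x)‖ ≥ σ·‖x‖ for all x ∈ ℝ^H (i.e., σ is a lower bound on the smallest singular value of the injective composite map W∘U). Then for all τ₁, τ₂ ∈ ℝ^H: ‖τ₁ − τ₂‖² ≤ 2·(L(τ₁) + L(τ₂)) / (|S|·σ²). In particular, as the TR losses decrease and the number of common transitions |S| increases, the distance between the two trajectory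 representations decreases. -/
/-!
At a common transition `s` the two residuals `W (U τᵢ + V (z s)) - z' s` differ by
`W (U (τ₁ - τ₂))`, since the shared input and target cancel; its norm is at least `σ ‖τ₁ - τ₂‖`.
The triangle inequality and `(a + b)² ≤ 2 (a² + b²)` then bound `σ² ‖τ₁ - τ₂‖²` by twice the sum
of the two squared residuals at `s`, and summing over the `|S|` transitions gives
`|S| σ² ‖τ₁ - τ₂‖² ≤ 2 (L τ₁ + L τ₂)`.
-/

theorem sq_le_two_mul_add_sq_norm_of_le_norm_sub {F : Type*} [SeminormedAddCommGroup F]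
    {c : ℝ} (hc : 0 ≤ c) {u v : F} (h : c ≤ ‖u - v‖) :
    c ^ 2 ≤ 2 * (‖u‖ ^ 2 + ‖v‖ ^ 2) :=
  (pow_le_pow_left₀ hc (h.trans (norm_sub_le u v)) 2).trans add_sq_le

theorem card_mul_sq_le_sum_sq_norm_residuals {S E F : Type*} [Fintype S]
    [SeminormedAddCommGroup E] [SeminormedAddCommGroup F] [Module ℝ E] [Module ℝ F]
    (A : E →ₗ[ℝ] F) {σ : ℝ} (hσ : 0 ≤ σ) (hA : ∀ x, ‖A x‖ ≥ σ * ‖x‖)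
    (r : S → E → F) (hr : ∀ s τ₁ τ₂, r s τ₁ - r s τ₂ = A (τ₁ - τ₂)) (τ₁ τ₂ : E) :
    Fintype.card S * (σ * ‖τ₁ - τ₂‖) ^ 2 ≤
      2 * (∑ s, ‖r s τ₁‖ ^ 2 + ∑ s, ‖r s τ₂‖ ^ 2) := by
  have pointwise : ∀ s ∈ Finset.univ, (σ * ‖τ₁ - τ₂‖) ^ 2 ≤ 2 * (‖r s τ₁‖ ^ 2 + ‖r s τ₂‖ ^ 2) :=
    fun s _ => sq_le_two_mul_add_sq_norm_of_le_norm_sub (by positivity)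
      ((hA _).trans_eq (congrArg norm (hr s τ₁ τ₂).symm))
  simpa only [Finset.card_univ, nsmul_eq_mul, ← Finset.mul_sum, Finset.sum_add_distrib]
    using Finset.card_nsmul_le_sum _ _ _ pointwise

theorem tr_loss_controls_representation_distance_general
    (H m d : ℕ)
    (U : EuclideanSpace ℝ (Fin H) →ₗ[ℝ] EuclideanSpace ℝ (Fin m))
    (V : EuclideanSpace ℝ (Fin d) →ₗ[ℝ] EuclideanSpace ℝ (Fin m))
    (W : EuclideanSpace ℝ (Fin m) →ₗ[ℝ] EuclideanSpace ℝ (Fin d))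
    (S : Type) [Fintype S] [Nonempty S]
    (z z' : S → EuclideanSpace ℝ (Fin d))
    (L : EuclideanSpace ℝ (Fin H) → ℝ)
    (hL : ∀ τ, L τ = ∑ s : S, ‖W (U τ + V (z s)) - z' s‖ ^ 2)
    (σ : ℝ) (hσ : 0 < σ)
    (hsing : ∀ x : EuclideanSpace ℝ (Fin H), ‖W (U x)‖ ≥ σ * ‖x‖)
    (τ₁ τ₂ : EuclideanSpace ℝ (Fin H)) :
    ‖τ₁ - τ₂‖ ^ 2 ≤ 2 * (L τ₁ + L τ₂) / ((Fintype.card S : ℝ) * σ ^ 2) := by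
  have hsum := card_mul_sq_le_sum_sq_norm_residuals (W ∘ₗ U) hσ.le hsing
    (fun s τ => W (U τ + V (z s)) - z' s)
    (fun s τ₁ τ₂ => by simp only [LinearMap.comp_apply, map_add, map_sub]; abel) τ₁ τ₂
  rw [← hL, ← hL] at hsum
  rw [le_div_iff₀ (by positivity)]
  linarith [mul_pow σ ‖τ₁ - τ₂‖ 2]

/-- Appendix A conclusion: if the composite read-out map `W ∘ U` has smallest
singular value at least `σ > 0`, then trajectories with small TR losses over a
common transition set `S` have nearby representations:
`‖τ₁ - τ₂‖² ≤ 2 (L τ₁ + L τ₂) / (|S| σ²)`. -/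
theorem tr_loss_controls_representation_distance
    (H m d : ℕ) (hH : 0 < H) (hm : 0 < m) (hd : 0 < d)
    (U : EuclideanSpace ℝ (Fin H) →ₗ[ℝ] EuclideanSpace ℝ (Fin m))
    (V : EuclideanSpace ℝ (Fin d) →ₗ[ℝ] EuclideanSpace ℝ (Fin m))
    (W : EuclideanSpace ℝ (Fin m) →ₗ[ℝ] EuclideanSpace ℝ (Fin d))
    (S : Type) [Fintype S] [Nonempty S]
    (z z' : S → EuclideanSpace ℝ (Fin d))
    (L : EuclideanSpace ℝ (Fin H) → ℝ)
    (hL : ∀ τ, L τ = ∑ s : S, ‖W (U τ + V (z s)) - z' s‖ ^ 2)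
    (σ : ℝ) (hσ : 0 < σ)
    (hsing : ∀ x : EuclideanSpace ℝ (Fin H), ‖W (U x)‖ ≥ σ * ‖x‖)
    (τ₁ τ₂ : EuclideanSpace ℝ (Fin H)) :
    ‖τ₁ - τ₂‖ ^ 2 ≤ 2 * (L τ₁ + L τ₂) / ((Fintype.card S : ℝ) * σ ^ 2) :=
  tr_loss_controls_representation_distance_general H m d U V W S z z' L hL σ hσ hsing τ₁ τ₂
end

section
/- Let T be a nonempty finite type (the trajectory space), A a nonempty finite type (the action space), γ a real with 0 ≤ γ < 1, K ≥ 1 an integer, r : T → A → ℝ, and P : A → T → T → ℝ a stochastic kernel, i.e. P a x y ≥ 0 for all a, x, y and Σ_{y} P a x y = 1 for all a, x. Define the operator H on functions f : T → ℝ by H f x = (1/K)·max_{a ∈ A} Σ_{y} P a x y · ( r x a + γ·f y ) + ((K−1)/K)·f x. Then for all f₁, f₂ : T → ℝ, sup_{x ∈ T} |H f₁ x − H f₂ x| ≤ ((γ + K − 1)/K) · sup_{x ∈ T} |f₁ x − f₂ x|. -/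
/-! Taking a maximum over actions and averaging against a stochastic kernel are both
nonexpansive in the sup-norm, so the Bellman part of `H` moves by at most `γ‖f₁ - f₂‖`.
`H` mixes it with the identity in proportions `1/K` and `(K-1)/K`, giving the modulus
`(γ + K - 1)/K`. -/

open Finset

theorem Finset.abs_sup'_sub_sup'_le {ι : Type*} {s : Finset ι} (hs : s.Nonempty)
    {u v : ι → ℝ} {c : ℝ} (h : ∀ i ∈ s, |u i - v i| ≤ c) :
    |s.sup' hs u - s.sup' hs v| ≤ c := by
  rw [abs_sub_le_iff, sub_le_iff_le_add, sub_le_iff_le_add]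
  constructor
  · refine sup'_le _ _ fun i hi => ?_
    linarith [(abs_le.mp (h i hi)).2, le_sup' v hi]
  · refine sup'_le _ _ fun i hi => ?_
    linarith [(abs_le.mp (h i hi)).1, le_sup' u hi]

theorem abs_sum_mul_le_of_sum_eq_one {ι : Type*} (s : Finset ι) {p g : ι → ℝ} {M : ℝ}
    (hp0 : ∀ i ∈ s, 0 ≤ p i) (hp1 : ∑ i ∈ s, p i = 1) (hg : ∀ i ∈ s, |g i| ≤ M) :
    |∑ i ∈ s, p i * g i| ≤ M :=
  calc |∑ i ∈ s, p i * g i| ≤ ∑ i ∈ s, |p i * g i| := abs_sum_le_sum_abs _ _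
    _ ≤ ∑ i ∈ s, p i * M := sum_le_sum fun i hi => by
        rw [abs_mul, abs_of_nonneg (hp0 i hi)]
        exact mul_le_mul_of_nonneg_left (hg i hi) (hp0 i hi)
    _ = M := by rw [← sum_mul, hp1, one_mul]

theorem abs_sum_mul_add_mul_sub_le {ι : Type*} (s : Finset ι) {p g₁ g₂ : ι → ℝ}
    {c γ M : ℝ} (hγ : 0 ≤ γ) (hp0 : ∀ i ∈ s, 0 ≤ p i) (hp1 : ∑ i ∈ s, p i = 1)
    (hg : ∀ i ∈ s, |g₁ i - g₂ i| ≤ M) :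
    |∑ i ∈ s, p i * (c + γ * g₁ i) - ∑ i ∈ s, p i * (c + γ * g₂ i)| ≤ γ * M := by
  have hdiff : ∑ i ∈ s, p i * (c + γ * g₁ i) - ∑ i ∈ s, p i * (c + γ * g₂ i) =
      γ * ∑ i ∈ s, p i * (g₁ i - g₂ i) := by
    rw [← sum_sub_distrib, mul_sum]
    exact sum_congr rfl fun i _ => by ring
  rw [hdiff, abs_mul, abs_of_nonneg hγ]
  exact mul_le_mul_of_nonneg_left (abs_sum_mul_le_of_sum_eq_one s hp0 hp1 hg) hγ

theorem abs_mix_sub_mix_le {α β s₁ s₂ t₁ t₂ a b : ℝ} (hα : 0 ≤ α) (hβ : 0 ≤ β)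
    (hs : |s₁ - s₂| ≤ a) (ht : |t₁ - t₂| ≤ b) :
    |(α * s₁ + β * t₁) - (α * s₂ + β * t₂)| ≤ α * a + β * b :=
  calc |(α * s₁ + β * t₁) - (α * s₂ + β * t₂)|
        = |α * (s₁ - s₂) + β * (t₁ - t₂)| := by congr 1; ring
    _ ≤ |α * (s₁ - s₂)| + |β * (t₁ - t₂)| := abs_add_le _ _
    _ = α * |s₁ - s₂| + β * |t₁ - t₂| := by
        rw [abs_mul, abs_mul, abs_of_nonneg hα, abs_of_nonneg hβ]
    _ ≤ α * a + β * b := by gcongr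

theorem refine_operator_contraction_general
    (T : Type*) [Fintype T] [Nonempty T]
    (A : Type*) [Fintype A] [Nonempty A]
    (γ : ℝ) (hγ0 : 0 ≤ γ)
    (K : ℕ) (hK : 1 ≤ K)
    (r : T → A → ℝ)
    (P : A → T → T → ℝ)
    (hP0 : ∀ a x y, 0 ≤ P a x y)
    (hP1 : ∀ a x, ∑ y : T, P a x y = 1)
    (H : (T → ℝ) → T → ℝ)
    (hH : ∀ f x, H f x =
      (1 / (K : ℝ)) *
          (univ.sup' univ_nonempty fun a => ∑ y : T, P a x y * (r x a + γ * f y)) +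
        (((K : ℝ) - 1) / (K : ℝ)) * f x)
    (f₁ f₂ : T → ℝ) :
    (univ.sup' univ_nonempty fun x => |H f₁ x - H f₂ x|) ≤
      ((γ + (K : ℝ) - 1) / (K : ℝ)) *
        univ.sup' univ_nonempty fun x => |f₁ x - f₂ x| := by
  set M := univ.sup' univ_nonempty fun x => |f₁ x - f₂ x|
  have hf : ∀ y ∈ univ, |f₁ y - f₂ y| ≤ M := fun _ hy =>
    le_sup' (fun x => |f₁ x - f₂ x|) hy
  have hK' : (1 : ℝ) ≤ K := by exact_mod_cast hK
  refine sup'_le _ _ fun x hx => ?_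
  have hmax := abs_sup'_sub_sup'_le univ_nonempty fun a _ =>
    abs_sum_mul_add_mul_sub_le univ (c := r x a) hγ0 (fun y _ => hP0 a x y) (hP1 a x) hf
  calc |H f₁ x - H f₂ x| ≤ 1 / (K : ℝ) * (γ * M) + ((K : ℝ) - 1) / K * M := by
        rw [hH, hH]
        exact abs_mix_sub_mix_le (by positivity) (div_nonneg (by linarith) (by positivity))
          hmax (hf x hx)
    _ = (γ + (K : ℝ) - 1) / K * M := by field_simp; ring

/-- Appendix C, key lemma of Proposition 1: the expected refine operator
`H f x = (1/K)·max_a Σ_y P a x y (r x a + γ f y) + ((K-1)/K)·f x` is a sup-norm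
contraction with modulus `(γ + K - 1)/K`. -/
theorem refine_operator_contraction
    (T : Type*) [Fintype T] [Nonempty T]
    (A : Type*) [Fintype A] [Nonempty A]
    (γ : ℝ) (hγ0 : 0 ≤ γ) (hγ1 : γ < 1)
    (K : ℕ) (hK : 1 ≤ K)
    (r : T → A → ℝ)
    (P : A → T → T → ℝ)
    (hP0 : ∀ a x y, 0 ≤ P a x y)
    (hP1 : ∀ a x, ∑ y : T, P a x y = 1)
    (H : (T → ℝ) → T → ℝ)
    (hH : ∀ f x, H f x =
      (1 / (K : ℝ)) *
          (univ.sup' univ_nonempty fun a => ∑ y : T, P a x y * (r x a + γ * f y)) +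
        (((K : ℝ) - 1) / (K : ℝ)) * f x)
    (f₁ f₂ : T → ℝ) :
    (univ.sup' univ_nonempty fun x => |H f₁ x - H f₂ x|) ≤
      ((γ + (K : ℝ) - 1) / (K : ℝ)) *
        univ.sup' univ_nonempty fun x => |f₁ x - f₂ x| :=
  refine_operator_contraction_general T A γ hγ0 K hK r P hP0 hP1 H hH f₁ f₂
end
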